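/- Let Y be a real random variable such that E[|Y|^k] < ∞ for all k ∈ ℕ, and suppose lim_{k→∞} (|E[Y^k]|/k!)^{1/k} = 0. Then the function φ(z) = E[e^{izY}] is well defined and entire on ℂ. Conversely, if φ is entire then all absolute moments are finite and the limit holds. -/

import Mathlib

open MeasureTheory Filter

set_option linter.unusedSectionVars false
set_option maxHeartbeats 800000

section EntireChfAux

variable {Ω : Type*} [MeasurableSpace Ω] {μ : Measure Ω} [IsProbabilityMeasure μ] {Y : Ω → ℝ}

lemma chf_meas (hY : Measurable Y) (z : ℂ) :
    AEStronglyMeasurable (fun ω => Complex.exp (Complex.I * z * (Y ω : ℂ))) μ :=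
  (Complex.measurable_exp.comp
    (measurable_const.mul (Complex.measurable_ofReal.comp hY))).aestronglyMeasurable

lemma norm_chf (z : ℂ) (y : ℝ) :
    ‖Complex.exp (Complex.I * z * (y : ℂ))‖ = Real.exp (-(z.im) * y) := by
  rw [Complex.norm_exp]
  congr 1
  simp [Complex.mul_re]

lemma expmom_of_forall (hY : Measurable Y)
    (h : ∀ z : ℂ, Integrable (fun ω => Complex.exp (Complex.I * z * (Y ω : ℂ))) μ) (t : ℝ) :
    Integrable (fun ω => Real.exp (t * |Y ω|)) μ := by
  have h1 := (h (Complex.I * t)).norm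
  have h2 := (h (-(Complex.I) * t)).norm
  simp only [norm_chf] at h1 h2
  have him1 : (Complex.I * (t:ℂ)).im = t := by simp
  have him2 : ((-Complex.I) * (t:ℂ)).im = -t := by simp
  rw [him1] at h1
  rw [him2] at h2
  simp only [neg_neg] at h2
  refine ((h2.add h1).mono' ?_ ?_)
  · exact (Real.measurable_exp.comp (measurable_const.mul hY.abs)).aestronglyMeasurable
  · filter_upwards with ω
    simp only [Pi.add_apply]
    rw [Real.norm_of_nonneg (Real.exp_nonneg _)]
    have h3 : t * |Y ω| ≤ |t * Y ω| := by
      rw [abs_mul]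
      exact mul_le_mul_of_nonneg_right (le_abs_self t) (abs_nonneg _)
    have key : Real.exp (t * |Y ω|) ≤ Real.exp (t * Y ω) + Real.exp (-t * Y ω) := by
      rcases abs_cases (t * Y ω) with ⟨he, _⟩ | ⟨he, _⟩
      · have := Real.exp_le_exp.2 (h3.trans he.le)
        linarith [Real.exp_nonneg (-t * Y ω)]
      · have h4 : t * |Y ω| ≤ -t * Y ω := by rw [neg_mul]; exact h3.trans he.le
        have := Real.exp_le_exp.2 h4
        linarith [Real.exp_nonneg (t * Y ω)]
    exact key

lemma integrable_abs_pow (hY : Measurable Y)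
    (hP : ∀ t : ℝ, Integrable (fun ω => Real.exp (t * |Y ω|)) μ) (k : ℕ) :
    Integrable (fun ω => |Y ω| ^ k) μ := by
  refine ((hP 1).const_mul (Nat.factorial k)).mono'
    ((hY.abs.pow_const k).aestronglyMeasurable) ?_
  filter_upwards with ω
  rw [Real.norm_of_nonneg (pow_nonneg (abs_nonneg _) _), one_mul]
  have := Real.pow_div_factorial_le_exp (x := |Y ω|) (abs_nonneg _) k
  rw [div_le_iff₀ (by positivity : (0:ℝ) < (Nat.factorial k))] at this
  linarith [this]

lemma integrable_chf (hY : Measurable Y)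
    (hP : ∀ t : ℝ, Integrable (fun ω => Real.exp (t * |Y ω|)) μ) (z : ℂ) :
    Integrable (fun ω => Complex.exp (Complex.I * z * (Y ω : ℂ))) μ := by
  refine (hP |z.im|).mono' (chf_meas hY z) ?_
  filter_upwards with ω
  rw [norm_chf]
  apply Real.exp_le_exp.2
  calc -(z.im) * Y ω ≤ |(-(z.im)) * Y ω| := le_abs_self _
    _ = |z.im| * |Y ω| := by rw [abs_mul, abs_neg]

lemma tendsto_moments (hY : Measurable Y)
    (hP : ∀ t : ℝ, Integrable (fun ω => Real.exp (t * |Y ω|)) μ)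
    (h1 : ∀ k : ℕ, Integrable (fun ω => |Y ω| ^ k) μ) :
    Tendsto (fun k : ℕ =>
        (|∫ ω, Y ω ^ k ∂μ| / (Nat.factorial k)) ^ (1 / (k : ℝ))) atTop (nhds 0) := by
  rw [NormedAddCommGroup.tendsto_nhds_zero]
  intro ε hε
  set t : ℝ := 2 / ε with ht
  have htpos : 0 < t := by positivity
  set C : ℝ := ∫ ω, Real.exp (t * |Y ω|) ∂μ with hC
  have hC1 : 1 ≤ C := by
    have : ∫ (_ : Ω), (1:ℝ) ∂μ ≤ C := by
      apply integral_mono (integrable_const 1) (hP t)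
      intro ω
      exact Real.one_le_exp (by positivity)
    simpa using this
  -- moment bound
  have hmom : ∀ k : ℕ, |∫ ω, Y ω ^ k ∂μ| / (Nat.factorial k) ≤ C / t ^ k := by
    intro k
    have hb1 : |∫ ω, Y ω ^ k ∂μ| ≤ ∫ ω, |Y ω| ^ k ∂μ := by
      calc |∫ ω, Y ω ^ k ∂μ| ≤ ∫ ω, |Y ω ^ k| ∂μ := by
            simpa [Real.norm_eq_abs] using
              norm_integral_le_integral_norm (μ := μ) (fun ω => Y ω ^ k)
        _ = ∫ ω, |Y ω| ^ k ∂μ := by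
            congr 1; funext ω; rw [abs_pow]
    have hb2 : ∫ ω, |Y ω| ^ k ∂μ ≤ (Nat.factorial k) / t ^ k * C := by
      rw [hC, ← integral_const_mul]
      apply integral_mono (h1 k) (((hP t).const_mul _))
      intro ω
      dsimp only
      have := Real.pow_div_factorial_le_exp (x := t * |Y ω|) (by positivity) k
      rw [div_le_iff₀ (by positivity : (0:ℝ) < (Nat.factorial k)), mul_pow] at this
      have htk : (0:ℝ) < t ^ k := by positivity
      rw [div_mul_eq_mul_div, le_div_iff₀ htk]
      calc |Y ω| ^ k * t ^ k = t ^ k * |Y ω| ^ k := by ring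
        _ ≤ Real.exp (t * |Y ω|) * ↑(Nat.factorial k) := this
        _ = ↑(Nat.factorial k) * Real.exp (t * |Y ω|) := by ring
    rw [div_le_div_iff₀ (by positivity) (by positivity : (0:ℝ) < t ^ k)]
    calc |∫ ω, Y ω ^ k ∂μ| * t ^ k ≤ ((Nat.factorial k) / t ^ k * C) * t ^ k := by
          apply mul_le_mul_of_nonneg_right (hb1.trans hb2) (by positivity)
      _ = C * ↑(Nat.factorial k) := by field_simp
  -- C ^ (1/k) → 1
  have hCt : Tendsto (fun k : ℕ => C ^ (1 / (k : ℝ))) atTop (nhds 1) := by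
    have h0 : Tendsto (fun k : ℕ => 1 / (k : ℝ)) atTop (nhds 0) :=
      tendsto_one_div_atTop_nhds_zero_nat
    have := (tendsto_const_nhds (x := C) (f := atTop (α := ℕ))).rpow h0
      (Or.inl (by positivity))
    simpa using this
  have hev : ∀ᶠ k : ℕ in atTop, C ^ (1 / (k : ℝ)) < 2 :=
    hCt.eventually (Filter.Tendsto.eventually_lt_const (by norm_num) tendsto_id) |>.mono (fun _ h => h)
  filter_upwards [hev, eventually_ge_atTop 1] with k hk hk1
  have hknz : (k : ℝ) ≠ 0 := by positivity
  have hnn : 0 ≤ |∫ ω, Y ω ^ k ∂μ| / (Nat.factorial k) := by positivity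
  rw [Real.norm_of_nonneg (Real.rpow_nonneg hnn _)]
  have step : (|∫ ω, Y ω ^ k ∂μ| / (Nat.factorial k)) ^ (1 / (k:ℝ)) ≤ (C / t ^ k) ^ (1/(k:ℝ)) :=
    Real.rpow_le_rpow hnn (hmom k) (by positivity)
  have heq : (C / t ^ k) ^ (1/(k:ℝ)) = C ^ (1/(k:ℝ)) / t := by
    rw [Real.div_rpow (by linarith) (by positivity)]
    congr 1
    rw [← Real.rpow_natCast t k, ← Real.rpow_mul htpos.le]
    rw [mul_one_div, div_self hknz, Real.rpow_one]
  have hfin : (|∫ ω, Y ω ^ k ∂μ| / (Nat.factorial k)) ^ (1 / (k:ℝ)) < 2 / t := by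
    rw [heq] at step
    exact step.trans_lt (by gcongr)
  have : 2 / t = ε := by rw [ht]; field_simp
  rwa [this] at hfin

lemma diff_chf (hY : Measurable Y)
    (hP : ∀ t : ℝ, Integrable (fun ω => Real.exp (t * |Y ω|)) μ) :
    Differentiable ℂ (fun z : ℂ => ∫ ω, Complex.exp (Complex.I * z * (Y ω : ℂ)) ∂μ) := by
  intro z₀
  have key := hasDerivAt_integral_of_dominated_loc_of_deriv_le (μ := μ) (x₀ := z₀)
    (F := fun z ω => Complex.exp (Complex.I * z * (Y ω : ℂ)))
    (F' := fun z ω => Complex.exp (Complex.I * z * (Y ω : ℂ)) * (Complex.I * (Y ω : ℂ)))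
    (bound := fun ω => |Y ω| * Real.exp ((‖z₀‖ + 1) * |Y ω|))
    (Metric.ball_mem_nhds z₀ one_pos)
    (Eventually.of_forall fun z => chf_meas hY z)
    (integrable_chf hY hP z₀)
    ((chf_meas hY z₀).mul
      ((measurable_const.mul (Complex.measurable_ofReal.comp hY)).aestronglyMeasurable))
    ?_ ?_ ?_
  · exact key.2.differentiableAt
  · filter_upwards with ω
    intro z hz
    have h1 : ‖Complex.exp (Complex.I * z * (Y ω : ℂ)) * (Complex.I * (Y ω : ℂ))‖
        = Real.exp (-(z.im) * Y ω) * |Y ω| := by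
      rw [norm_mul, norm_chf, norm_mul, Complex.norm_I, one_mul, Complex.norm_real,
        Real.norm_eq_abs]
    rw [h1, mul_comm]
    have hzle : ‖z‖ ≤ ‖z₀‖ + 1 := by
      have := mem_ball_iff_norm.1 hz
      calc ‖z‖ = ‖z₀ + (z - z₀)‖ := by ring_nf
        _ ≤ ‖z₀‖ + ‖z - z₀‖ := norm_add_le _ _
        _ ≤ ‖z₀‖ + 1 := by linarith
    have : -(z.im) * Y ω ≤ (‖z₀‖ + 1) * |Y ω| := by
      calc -(z.im) * Y ω ≤ |(-(z.im)) * Y ω| := le_abs_self _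
        _ = |z.im| * |Y ω| := by rw [abs_mul, abs_neg]
        _ ≤ ‖z‖ * |Y ω| := by
            apply mul_le_mul_of_nonneg_right (Complex.abs_im_le_norm z) (abs_nonneg _)
        _ ≤ (‖z₀‖ + 1) * |Y ω| := mul_le_mul_of_nonneg_right hzle (abs_nonneg _)
    exact mul_le_mul_of_nonneg_left (Real.exp_le_exp.2 this) (abs_nonneg _)
  · refine (hP (‖z₀‖ + 1 + 1)).mono'
      ((hY.abs.mul ((measurable_const.mul hY.abs).exp)).aestronglyMeasurable) ?_
    filter_upwards with ω
    rw [Real.norm_of_nonneg (by positivity)]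
    have h2 : |Y ω| ≤ Real.exp |Y ω| := by
      have := Real.add_one_le_exp |Y ω|
      linarith
    calc |Y ω| * Real.exp ((‖z₀‖ + 1) * |Y ω|)
        ≤ Real.exp |Y ω| * Real.exp ((‖z₀‖ + 1) * |Y ω|) :=
          mul_le_mul_of_nonneg_right h2 (Real.exp_nonneg _)
      _ = Real.exp ((‖z₀‖ + 1 + 1) * |Y ω|) := by rw [← Real.exp_add]; ring_nf
  · filter_upwards with ω
    intro z hz
    have h0 : HasDerivAt (fun z : ℂ => Complex.I * z * (Y ω : ℂ)) (Complex.I * (Y ω : ℂ)) z := by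
      simpa using ((hasDerivAt_id z).const_mul Complex.I).mul_const ((Y ω : ℂ))
    exact h0.cexp

lemma expmom_of_moments (hY : Measurable Y)
    (h1 : ∀ k : ℕ, Integrable (fun ω => |Y ω| ^ k) μ)
    (h2 : Tendsto (fun k : ℕ =>
        (|∫ ω, Y ω ^ k ∂μ| / (Nat.factorial k)) ^ (1 / (k : ℝ))) atTop (nhds 0))
    (t : ℝ) : Integrable (fun ω => Real.exp (t * |Y ω|)) μ := by
  rcases le_or_gt t 0 with htle | htpos
  · refine (integrable_const (1:ℝ)).mono'
      ((Real.measurable_exp.comp (measurable_const.mul hY.abs)).aestronglyMeasurable) ?_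
    filter_upwards with ω
    rw [Real.norm_of_nonneg (Real.exp_nonneg _)]
    calc Real.exp (t * |Y ω|) ≤ Real.exp 0 :=
          Real.exp_le_exp.2 (mul_nonpos_of_nonpos_of_nonneg htle (abs_nonneg _))
      _ = 1 := Real.exp_zero
  -- t > 0
  set b : ℕ → ℝ := fun k => ∫ ω, |Y ω| ^ k ∂μ with hb
  have hbnn : ∀ k, 0 ≤ b k := fun k => integral_nonneg (fun ω => by positivity)
  have heven : ∀ n : ℕ, ∫ ω, Y ω ^ (2 * n) ∂μ = b (2 * n) := by
    intro n
    rw [hb]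
    congr 1
    funext ω
    rw [← (even_two_mul n).pow_abs]
  -- eventual bound on even moments
  have hsmall : ∀ᶠ k : ℕ in atTop,
      (|∫ ω, Y ω ^ k ∂μ| / (Nat.factorial k)) ^ (1 / (k : ℝ)) < 1 / (2 * t) := by
    have := h2.eventually_lt_const (show (0:ℝ) < 1/(2*t) by positivity)
    exact this
  obtain ⟨N, hN⟩ := eventually_atTop.1 hsmall
  set M := max N 1 with hM
  have hbound : ∀ n : ℕ, n ≥ M → b (2 * n) / (Nat.factorial (2 * n)) ≤ (1 / (2 * t)) ^ (2 * n) := by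
    intro n hn
    have h2n : 2 * n ≥ N := le_trans (le_max_left N 1) (by omega)
    have h2n1 : 2 * n ≠ 0 := by
      have : 1 ≤ n := le_trans (le_max_right N 1) hn
      omega
    have hx : (0:ℝ) ≤ b (2 * n) / (Nat.factorial (2 * n)) := by positivity
    have hlt := (hN (2 * n) h2n).le
    rw [heven n, abs_of_nonneg (hbnn _)] at hlt
    have := Real.rpow_le_rpow (Real.rpow_nonneg hx _) hlt (by positivity : (0:ℝ) ≤ (2*n : ℕ))
    rwa [one_div (((2*n : ℕ)):ℝ), Real.rpow_inv_rpow hx (by exact_mod_cast h2n1),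
      Real.rpow_natCast (1/(2*t)) (2*n)] at this
  -- summability of the even-series integrals
  set d : ℕ → ℝ := fun n => t ^ (2 * n) / (Nat.factorial (2 * n)) * b (2 * n) with hd
  have hdnn : ∀ n, 0 ≤ d n := fun n => by
    have := hbnn (2*n); positivity
  have hdsum : Summable d := by
    rw [← summable_nat_add_iff M]
    refine Summable.of_nonneg_of_le (fun n => hdnn _)
      (f := fun n => (1/4 : ℝ) ^ (n + M)) ?_ ?_
    · intro n
      have hub := hbound (n + M) (by omega)
      have hfac : (0:ℝ) < (Nat.factorial (2 * (n + M))) := by positivity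
      have : d (n + M) ≤ t ^ (2 * (n+M)) * (1/(2*t)) ^ (2*(n+M)) := by
        have hdval : d (n + M)
            = t ^ (2*(n+M)) * (b (2*(n+M)) / (Nat.factorial (2*(n+M)))) := by
          rw [hd]; ring
        rw [hdval]
        exact mul_le_mul_of_nonneg_left hub (by positivity)
      calc d (n + M) ≤ t ^ (2 * (n+M)) * (1/(2*t)) ^ (2*(n+M)) := this
        _ = (1/2 : ℝ) ^ (2 * (n + M)) := by
            rw [← mul_pow]
            congr 1
            field_simp
        _ = (1/4 : ℝ) ^ (n + M) := by
            rw [pow_mul]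
            norm_num
    · have : (fun n : ℕ => (1/4 : ℝ) ^ (n + M)) = fun n : ℕ => (1/4:ℝ)^n * (1/4:ℝ)^M := by
        funext n; rw [pow_add]
      rw [this]
      exact (summable_geometric_of_lt_one (by norm_num) (by norm_num)).mul_right _
  -- each series term is integrable with integral d n
  have hgrw : ∀ n : ℕ, (fun ω => (t * Y ω) ^ (2*n) / (Nat.factorial (2*n)))
      = fun ω => (t ^ (2*n) / (Nat.factorial (2*n))) * |Y ω| ^ (2*n) := by
    intro n
    funext ω
    rw [mul_pow, ← (even_two_mul n).pow_abs (Y ω)]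
    ring
  have hgint : ∀ n : ℕ, Integrable (fun ω => (t * Y ω) ^ (2*n) / (Nat.factorial (2*n))) μ := by
    intro n
    rw [hgrw n]
    exact (h1 (2*n)).const_mul _
  have hgeq : ∀ n : ℕ, ∫ ω, (t * Y ω) ^ (2*n) / (Nat.factorial (2*n)) ∂μ = d n := by
    intro n
    rw [hgrw n, integral_const_mul]
  -- integrability of cosh (t * Y)
  have hcosh : Integrable (fun ω => Real.cosh (t * Y ω)) μ := by
    have hmeas : Measurable fun ω => Real.cosh (t * Y ω) :=
      Real.measurable_cosh.comp (measurable_const.mul hY)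
    refine ⟨hmeas.aestronglyMeasurable, ?_⟩
    rw [hasFiniteIntegral_iff_norm]
    have hpt : ∀ ω, ENNReal.ofReal ‖Real.cosh (t * Y ω)‖
        = ∑' n : ℕ, ENNReal.ofReal ((t * Y ω) ^ (2*n) / (Nat.factorial (2*n))) := by
      intro ω
      rw [Real.norm_of_nonneg (Real.cosh_pos _).le, Real.cosh_eq_tsum]
      exact ENNReal.ofReal_tsum_of_nonneg
        (fun n => div_nonneg ((even_two_mul n).pow_nonneg _) (by positivity))
        (Real.hasSum_cosh _).summable
    calc ∫⁻ ω, ENNReal.ofReal ‖Real.cosh (t * Y ω)‖ ∂μ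
        = ∫⁻ ω, ∑' n : ℕ, ENNReal.ofReal ((t * Y ω) ^ (2*n) / (Nat.factorial (2*n))) ∂μ := by
          apply lintegral_congr
          intro ω
          exact hpt ω
      _ = ∑' n : ℕ, ∫⁻ ω, ENNReal.ofReal ((t * Y ω) ^ (2*n) / (Nat.factorial (2*n))) ∂μ := by
          apply lintegral_tsum
          intro n
          exact (((measurable_const.mul hY).pow_const (2*n)).div_const _).ennreal_ofReal.aemeasurable
      _ = ∑' n : ℕ, ENNReal.ofReal (d n) := by
          congr 1
          funext n
          rw [← ofReal_integral_eq_lintegral_ofReal (hgint n) ?_, hgeq n]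
          filter_upwards with ω
          exact div_nonneg ((even_two_mul n).pow_nonneg _) (by positivity)
      _ = ENNReal.ofReal (∑' n, d n) := (ENNReal.ofReal_tsum_of_nonneg hdnn hdsum).symm
      _ < ⊤ := ENNReal.ofReal_lt_top
  -- conclude via exp (t|y|) ≤ 2 cosh (t y)
  refine (hcosh.const_mul 2).mono'
    ((Real.measurable_exp.comp (measurable_const.mul hY.abs)).aestronglyMeasurable) ?_
  filter_upwards with ω
  rw [Real.norm_of_nonneg (Real.exp_nonneg _), Real.cosh_eq]
  have h3 : t * |Y ω| ≤ |t * Y ω| := by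
    rw [abs_mul]
    exact mul_le_mul_of_nonneg_right (le_abs_self t) (abs_nonneg _)
  have key : Real.exp (t * |Y ω|) ≤ Real.exp (t * Y ω) + Real.exp (-(t * Y ω)) := by
    rcases abs_cases (t * Y ω) with ⟨he, _⟩ | ⟨he, _⟩
    · have := Real.exp_le_exp.2 (h3.trans he.le)
      linarith [Real.exp_nonneg (-(t * Y ω))]
    · have := Real.exp_le_exp.2 (h3.trans he.le)
      linarith [Real.exp_nonneg (t * Y ω)]
  linarith [key]

end EntireChfAux

/-- Characterization of entire characteristic functions: `φ(z) = E[exp(izY)]` extends to an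
entire function on `ℂ` if and only if all absolute moments of `Y` are finite and
`(|E[Y^k]| / k!)^(1/k) → 0`. -/
theorem entire_chf_characterization {Ω : Type*} [MeasurableSpace Ω] (μ : Measure Ω)
    [IsProbabilityMeasure μ] (Y : Ω → ℝ) (hY : Measurable Y) :
    ((∀ k : ℕ, Integrable (fun ω => |Y ω| ^ k) μ) ∧
      Tendsto (fun k : ℕ =>
          (|∫ ω, Y ω ^ k ∂μ| / (Nat.factorial k)) ^ (1 / (k : ℝ))) atTop (nhds 0))
    ↔ ∃ φ : ℂ → ℂ, Differentiable ℂ φ ∧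
        ∀ z : ℂ, Integrable (fun ω => Complex.exp (Complex.I * z * (Y ω : ℂ))) μ ∧
          φ z = ∫ ω, Complex.exp (Complex.I * z * (Y ω : ℂ)) ∂μ := by
  constructor
  · rintro ⟨h1, h2⟩
    have hP : ∀ t : ℝ, Integrable (fun ω => Real.exp (t * |Y ω|)) μ :=
      expmom_of_moments hY h1 h2
    exact ⟨fun z => ∫ ω, Complex.exp (Complex.I * z * (Y ω : ℂ)) ∂μ, diff_chf hY hP,
      fun z => ⟨integrable_chf hY hP z, rfl⟩⟩
  · rintro ⟨φ, _, hφ⟩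
    have hP : ∀ t : ℝ, Integrable (fun ω => Real.exp (t * |Y ω|)) μ :=
      expmom_of_forall hY (fun z => (hφ z).1)
    exact ⟨integrable_abs_pow hY hP, tendsto_moments hY hP (integrable_abs_pow hY hP)⟩
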